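/- arXiv:2402.07137 — 2 statements merged into one kernel-verified Lean document; each statement's English description precedes it below -/
import Mathlib

section
/- If two polynomials p and q of degree at least 2 commute, i.e. p∘q = q∘p, then J(p) = J(q). -/
open Polynomial OnePoint

noncomputable section

/-- The Riemann sphere, modelled as the one-point compactification of `ℂ`. -/
abbrev RSphere : Type := OnePoint ℂ

/-- The finite part of a point of the Riemann sphere (junk value `0` at `∞`). -/
def toFin : RSphere → ℂ := fun x => match x with
  | (∞ : RSphere) => 0
  | (z : ℂ) => z

/-- The chordal distance on the Riemann sphere. -/
def chordalDist : RSphere → RSphere → ℝ := fun x y =>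
  match x, y with
  | (∞ : RSphere), (∞ : RSphere) => 0
  | (∞ : RSphere), (w : ℂ) => 2 / Real.sqrt (1 + ‖w‖ ^ 2)
  | (z : ℂ), (∞ : RSphere) => 2 / Real.sqrt (1 + ‖z‖ ^ 2)
  | (z : ℂ), (w : ℂ) =>
      2 * ‖z - w‖ /
        (Real.sqrt (1 + ‖z‖ ^ 2) * Real.sqrt (1 + ‖w‖ ^ 2))

/-- The Fatou set of a self-map of the Riemann sphere: the set of points at which the
family of iterates is equicontinuous with respect to the chordal metric.  It is the largest
open set on which the iterates are equicontinuous. -/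
def FatouSet (R : RSphere → RSphere) : Set RSphere :=
  {x | ∀ ε : ℝ, 0 < ε → ∃ V ∈ nhds x, ∀ y ∈ V, ∀ n : ℕ, chordalDist (R^[n] x) (R^[n] y) < ε}

/-- The Julia set: the complement of the Fatou set. -/
def JuliaSet (R : RSphere → RSphere) : Set RSphere :=
  (FatouSet R)ᶜ

/-- A polynomial regarded as a self-map of the Riemann sphere fixing `∞`. -/
def polySphere (p : Polynomial ℂ) : RSphere → RSphere := fun x =>
  match x with
  | (∞ : RSphere) => ∞
  | (z : ℂ) => ((p.eval z : ℂ) : RSphere)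

/-- The affine map `z ↦ a z + b` extended to the Riemann sphere by `∞ ↦ ∞`. -/
def affineSphere (a b : ℂ) : RSphere → RSphere := fun x =>
  match x with
  | (∞ : RSphere) => ∞
  | (z : ℂ) => ((a * z + b : ℂ) : RSphere)

/-- The rational map `P/Q` as a self-map of the Riemann sphere (intended for a
representation `P/Q` in lowest terms). -/
def ratSphere (P Q : Polynomial ℂ) : RSphere → RSphere := fun x =>
  match x with
  | (∞ : RSphere) =>
      if P.natDegree > Q.natDegree then ∞
      else ((P.leadingCoeff / Q.leadingCoeff : ℂ) : RSphere)
  | (z : ℂ) =>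
      if Q.eval z = 0 then ∞ else ((P.eval z / Q.eval z : ℂ) : RSphere)

/-- The Möbius transformation `z ↦ (az+b)/(cz+d)` as a self-map of the Riemann sphere
(intended for `ad - bc ≠ 0`). -/
def mobiusSphere (a b c d : ℂ) : RSphere → RSphere := fun x =>
  match x with
  | (∞ : RSphere) => if c = 0 then ∞ else ((a / c : ℂ) : RSphere)
  | (z : ℂ) => if c * z + d = 0 then ∞ else (((a * z + b) / (c * z + d) : ℂ) : RSphere)

/-- The inversion `z ↦ 1/z` on the Riemann sphere. -/
def invSphere : RSphere → RSphere := fun x =>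
  match x with
  | (∞ : RSphere) => ((0 : ℂ) : RSphere)
  | (z : ℂ) => if z = 0 then ∞ else ((z⁻¹ : ℂ) : RSphere)

/-- `Σ R`: the group of rotations `z ↦ az + b` (`|a| = 1`, `a ≠ 1`, extended by `∞ ↦ ∞`)
preserving the Julia set of `R`, together with the identity. -/
def SigmaGroup (R : RSphere → RSphere) : Set (RSphere → RSphere) :=
  {σ | σ = id ∨ ∃ a b : ℂ, ‖a‖ = 1 ∧ a ≠ 1 ∧ σ = affineSphere a b ∧
        affineSphere a b '' JuliaSet R = JuliaSet R}

/-- `U` is a Fatou component of `R`: a connected component of the Fatou set. -/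
def IsFatouComponent (R : RSphere → RSphere) (U : Set RSphere) : Prop :=
  U.Nonempty ∧ IsOpen U ∧ IsPreconnected U ∧ U ⊆ FatouSet R ∧
    ∀ V : Set RSphere, IsPreconnected V → V ⊆ FatouSet R → U ⊆ V → V = U

/-- The multiplier of `R^[k]` at a fixed point `x` of `R^[k]` equals `lam`
(using the chart `w ↦ 1/w` at `∞`). -/
def MultiplierEq (R : RSphere → RSphere) (k : ℕ) (x : RSphere) (lam : ℂ) : Prop :=
  (∃ z₀ : ℂ, x = (z₀ : RSphere) ∧ HasDerivAt (fun z : ℂ => toFin (R^[k] (z : RSphere))) lam z₀) ∨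
  (x = (∞ : RSphere) ∧
    HasDerivAt (fun w : ℂ => toFin (invSphere (R^[k] (invSphere (w : RSphere))))) lam 0)

/-- `R` has a parabolic domain: a `k`-periodic Fatou component whose boundary contains a
`k`-periodic point whose multiplier is a root of unity. -/
def HasParabolicDomain (R : RSphere → RSphere) : Prop :=
  ∃ (U : Set RSphere) (k : ℕ), 0 < k ∧ IsFatouComponent R U ∧ R^[k] '' U ⊆ U ∧
    ∃ x ∈ frontier U, R^[k] x = x ∧
      ∃ lam : ℂ, (∃ m : ℕ, 0 < m ∧ lam ^ m = 1) ∧ MultiplierEq R k x lam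

/-- `R` has a rotation domain (Siegel disc or Herman ring): a `k`-periodic Fatou component
on which `R^[k]` is a bijection. -/
def HasRotationDomain (R : RSphere → RSphere) : Prop :=
  ∃ (U : Set RSphere) (k : ℕ), 0 < k ∧ IsFatouComponent R U ∧ Set.BijOn (R^[k]) U U

/-- A rational map is exceptional if its Julia set is the whole sphere, a circle in the
sphere, or a closed arc of such a circle (circles in the sphere being Möbius images of
the unit circle). -/
def ExceptionalMap (R : RSphere → RSphere) : Prop :=
  JuliaSet R = Set.univ ∨
    ∃ a b c d : ℂ, a * d - b * c ≠ 0 ∧ ∃ θ₁ θ₂ : ℝ,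
      JuliaSet R =
        mobiusSphere a b c d ''
          ((fun θ : ℝ => ((Complex.exp (θ * Complex.I) : ℂ) : RSphere)) '' Set.Icc θ₁ θ₂)

/-- `L_p(z) = p(z)p''(z)/p'(z)²`. -/
def Lfun (p : Polynomial ℂ) (z : ℂ) : ℂ :=
  p.eval z * (derivative (derivative p)).eval z / (p.derivative.eval z) ^ 2

/-- The Chebyshev method `C_p(z) = z - (1 + L_p(z)/2) p(z)/p'(z)` (as a map on `ℂ`). -/
def Cfun (p : Polynomial ℂ) (z : ℂ) : ℂ :=
  z - (1 + Lfun p z / 2) * (p.eval z / p.derivative.eval z)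

/-- The Chebyshev method of `p` as a rational self-map of the Riemann sphere:
`C_p = (2 z p'³ - 2 p p'² - p² p'') / (2 p'³)`. -/
def ChebSphere (p : Polynomial ℂ) : RSphere → RSphere :=
  ratSphere (C 2 * X * (derivative p) ^ 3 - C 2 * p * (derivative p) ^ 2
      - p ^ 2 * derivative (derivative p))
    (C 2 * (derivative p) ^ 3)


/-!
For `p` of degree at least `2` there is a radius `R ≥ 1` beyond which `‖p z‖ ≥ 2 ‖z‖`, so an orbit
that ever leaves the disc of radius `R` tends to `∞`, and the filled Julia set `K(p)` of points with
bounded orbit is closed and contained in that disc. The point `∞` and the escaping points are Fatou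
points, and so is the interior of `K(p)`, where the iterates are uniformly bounded and hence
equicontinuous by the Schwarz lemma; near a point of `∂K(p)`, whose orbit stays in the disc of
radius `R`, there are escaping points, so it is a Julia point. Thus `J(p) = ∂K(p)`.

If `p ∘ q = q ∘ p`, then `p^[n] (q z) = q (p^[n] z)`, so `q` maps `K(p)` into itself and the
`q`-orbit of a point of `K(p)` stays in the bounded set `K(p)`. Hence `K(p) ⊆ K(q)`, and by symmetry
`K(p) = K(q)`, so `J(p) = J(q)`.
-/

open Filter Metric Set Function Topology

theorem le_sqrt_one_add_sq (x : ℝ) : x ≤ √(1 + x ^ 2) :=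
  Real.le_sqrt_of_sq_le (by linarith)

theorem sqrt_one_add_sq_le {x : ℝ} (hx : 0 ≤ x) : √(1 + x ^ 2) ≤ 1 + x :=
  Real.sqrt_le_iff.mpr ⟨by positivity, by nlinarith⟩

theorem one_le_sqrt_one_add_sq (x : ℝ) : 1 ≤ √(1 + x ^ 2) :=
  Real.one_le_sqrt.mpr (by nlinarith)

theorem chordalDist_coe_coe_le (a b : ℂ) : chordalDist a b ≤ 2 * ‖a - b‖ :=
  div_le_self (by positivity) (one_le_mul_of_one_le_of_one_le
    (one_le_sqrt_one_add_sq _) (one_le_sqrt_one_add_sq _))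

theorem chordalDist_coe_coe_le_of_le_norm {T : ℝ} (hT : 0 < T) {a b : ℂ} (ha : T ≤ ‖a‖)
    (hb : T ≤ ‖b‖) : chordalDist a b ≤ 4 / T := by
  have ha₀ : 0 < ‖a‖ := hT.trans_le ha
  have hb₀ : 0 < ‖b‖ := hT.trans_le hb
  calc chordalDist a b
      ≤ 2 * (‖a‖ + ‖b‖) / (‖a‖ * ‖b‖) :=
        div_le_div₀ (by positivity) (by gcongr; exact norm_sub_le a b) (by positivity)
          (mul_le_mul (le_sqrt_one_add_sq _) (le_sqrt_one_add_sq _) hb₀.le (by positivity))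
    _ = 2 / ‖a‖ + 2 / ‖b‖ := by field_simp; ring
    _ ≤ 2 / T + 2 / T := by gcongr
    _ = 4 / T := by ring

theorem chordalDist_infty_coe_le_of_le_norm {T : ℝ} (hT : 0 < T) {b : ℂ} (hb : T ≤ ‖b‖) :
    chordalDist ∞ b ≤ 2 / T :=
  div_le_div_of_nonneg_left zero_le_two hT (hb.trans (le_sqrt_one_add_sq _))

theorem inv_two_mul_one_add_le_chordalDist {R : ℝ} (hR : 1 ≤ R) {a b : ℂ} (ha : ‖a‖ ≤ R)
    (hb : 2 * R ≤ ‖b‖) : (2 * (1 + R))⁻¹ ≤ chordalDist a b := by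
  have hb₁ : 1 ≤ ‖b‖ := by linarith
  have hsub : ‖b‖ ≤ 2 * ‖a - b‖ := by linarith [norm_sub_norm_le b a, norm_sub_rev a b]
  have hden : √(1 + ‖a‖ ^ 2) * √(1 + ‖b‖ ^ 2) ≤ (1 + R) * (2 * ‖b‖) :=
    mul_le_mul ((sqrt_one_add_sq_le (norm_nonneg a)).trans (by linarith))
      ((sqrt_one_add_sq_le (norm_nonneg b)).trans (by linarith)) (by positivity) (by positivity)
  change _ ≤ 2 * ‖a - b‖ / (√(1 + ‖a‖ ^ 2) * √(1 + ‖b‖ ^ 2))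
  rw [le_div_iff₀ (by positivity)]
  calc (2 * (1 + R))⁻¹ * (√(1 + ‖a‖ ^ 2) * √(1 + ‖b‖ ^ 2))
      ≤ (2 * (1 + R))⁻¹ * ((1 + R) * (2 * ‖b‖)) := by gcongr
    _ = ‖b‖ := by field_simp
    _ ≤ 2 * ‖a - b‖ := hsub

theorem equicontinuousAt_of_differentiableOn_of_norm_le {ι : Type*} {F : ι → ℂ → ℂ}
    {c : ℂ} {U : Set ℂ} {M : ℝ} (hU : U ∈ 𝓝 c) (hd : ∀ i, DifferentiableOn ℂ (F i) U)
    (hM : ∀ i, ∀ z ∈ U, ‖F i z‖ ≤ M) : EquicontinuousAt F c := by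
  obtain ⟨r, hr, hball⟩ := Metric.mem_nhds_iff.mp hU
  refine Metric.equicontinuousAt_of_continuity_modulus (fun w => 2 * M / r * dist w c) ?_ F ?_
  · exact (continuous_const.mul (continuous_id.dist continuous_const)).tendsto' c 0 (by simp)
  filter_upwards [ball_mem_nhds c hr] with w hw i
  have hmaps : MapsTo (F i) (ball c r) (closedBall (F i c) (2 * M)) := fun x hx =>
    mem_closedBall.mpr <| (dist_le_norm_add_norm (F i x) (F i c)).trans <| by
      linarith [hM i x (hball hx), hM i c (hball (mem_ball_self hr))]
  rw [dist_comm]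
  exact Complex.dist_le_div_mul_dist_of_mapsTo_ball ((hd i).mono hball) hmaps hw

theorem mem_fatouSet_iff {R : RSphere → RSphere} {x : RSphere} :
    x ∈ FatouSet R ↔
      ∀ ε > 0, ∀ᶠ y in 𝓝 x, ∀ n, chordalDist (R^[n] x) (R^[n] y) < ε :=
  forall₂_congr fun _ _ => eventually_iff_exists_mem.symm

theorem polySphere_iterate_coe (p : ℂ[X]) (n : ℕ) (z : ℂ) :
    (polySphere p)^[n] z = ((p.eval ·)^[n] z : ℂ) := by
  induction n generalizing z with
  | zero => rfl
  | succ n ih => exact ih (p.eval z)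

theorem polySphere_iterate_infty (p : ℂ[X]) (n : ℕ) : (polySphere p)^[n] ∞ = ∞ :=
  iterate_fixed rfl n

theorem coe_mem_fatouSet_polySphere_iff {p : ℂ[X]} {z : ℂ} :
    (z : RSphere) ∈ FatouSet (polySphere p) ↔
      ∀ ε > 0, ∀ᶠ w in 𝓝 z, ∀ n,
        chordalDist ((p.eval ·)^[n] z : ℂ) ((p.eval ·)^[n] w : ℂ) < ε := by
  simp only [mem_fatouSet_iff, OnePoint.nhds_coe_eq, eventually_map, polySphere_iterate_coe]

theorem coe_mem_fatouSet_polySphere_of_equicontinuousAt {p : ℂ[X]} {z : ℂ}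
    (h : EquicontinuousAt (fun n => (p.eval ·)^[n]) z) :
    (z : RSphere) ∈ FatouSet (polySphere p) := by
  refine coe_mem_fatouSet_polySphere_iff.mpr fun ε hε => ?_
  filter_upwards [Metric.equicontinuousAt_iff_right.mp h (ε / 2) (half_pos hε)] with w hw n
  calc _ ≤ 2 * ‖_ - _‖ := chordalDist_coe_coe_le _ _
    _ < ε := by rw [← dist_eq_norm]; linarith [hw n]

def filledJuliaSet (p : ℂ[X]) : Set ℂ :=
  {z | ∃ M : ℝ, ∀ n, ‖(p.eval ·)^[n] z‖ ≤ M}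

def IsEscapeRadius (p : ℂ[X]) (R : ℝ) : Prop :=
  1 ≤ R ∧ ∀ z : ℂ, R ≤ ‖z‖ → 2 * ‖z‖ ≤ ‖p.eval z‖

theorem exists_isEscapeRadius {p : ℂ[X]} (hp : 2 ≤ p.natDegree) :
    ∃ R, IsEscapeRadius p R := by
  have hdeg : 0 < p.divX.degree :=
    natDegree_pos_iff_degree_pos.mp (by rw [natDegree_divX_eq_natDegree_tsub_one]; omega)
  obtain ⟨R₀, hR₀⟩ := ((atTop_basis.comap norm).eventually_iff).mp <|
    (p.divX.tendsto_norm_atTop hdeg tendsto_comap).eventually_ge_atTop (2 + ‖p.coeff 0‖)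
  refine ⟨max R₀ 1, le_max_right _ _, fun z hz => ?_⟩
  have hz₁ : 1 ≤ ‖z‖ := (le_max_right _ _).trans hz
  have hq : 2 + ‖p.coeff 0‖ ≤ ‖p.divX.eval z‖ := hR₀.2 (le_of_max_le_left hz)
  have hp : p.eval z = p.divX.eval z * z + p.coeff 0 := by
    conv_lhs => rw [← p.divX_mul_X_add]
    simp
  calc 2 * ‖z‖ ≤ ‖p.divX.eval z‖ * ‖z‖ - ‖p.coeff 0‖ := by
        nlinarith [norm_nonneg (p.coeff 0)]
    _ = ‖p.divX.eval z * z‖ - ‖-p.coeff 0‖ := by rw [norm_mul, norm_neg]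
    _ ≤ ‖p.eval z‖ := by
        rw [hp]; simpa using norm_sub_norm_le (p.divX.eval z * z) (-p.coeff 0)

namespace IsEscapeRadius

variable {p : ℂ[X]} {R : ℝ}

theorem pow_mul_le_norm_iterate (hR : IsEscapeRadius p R) {z : ℂ} (hz : R ≤ ‖z‖) (n : ℕ) :
    2 ^ n * ‖z‖ ≤ ‖(p.eval ·)^[n] z‖ := by
  induction n with
  | zero => simp
  | succ n ih =>
    rw [iterate_succ_apply', pow_succ']
    have h2n : (1 : ℝ) ≤ 2 ^ n := one_le_pow₀ one_le_two
    calc 2 * 2 ^ n * ‖z‖ ≤ 2 * ‖(p.eval ·)^[n] z‖ := by linarith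
      _ ≤ _ := hR.2 _ (hz.trans ((le_mul_of_one_le_left (norm_nonneg z) h2n).trans ih))

theorem le_norm_iterate (hR : IsEscapeRadius p R) {T : ℝ} (hT : R ≤ T) {z : ℂ}
    (hz : T ≤ ‖z‖) (n : ℕ) :
    T ≤ ‖(p.eval ·)^[n] z‖ :=
  hz.trans <| le_mul_of_one_le_left (norm_nonneg z) (one_le_pow₀ one_le_two) |>.trans
    (hR.pow_mul_le_norm_iterate (hT.trans hz) n)

theorem tendsto_norm_iterate (hR : IsEscapeRadius p R) {z : ℂ} (hz : R ≤ ‖z‖) :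
    Tendsto (fun n => ‖(p.eval ·)^[n] z‖) atTop atTop :=
  tendsto_atTop_mono (hR.pow_mul_le_norm_iterate hz) <|
    (tendsto_pow_atTop_atTop_of_one_lt one_lt_two).atTop_mul_const (by linarith [hR.1])

theorem mem_filledJuliaSet_iff (hR : IsEscapeRadius p R) {z : ℂ} :
    z ∈ filledJuliaSet p ↔ ∀ n, ‖(p.eval ·)^[n] z‖ ≤ R := by
  refine ⟨fun ⟨M, hM⟩ n => ?_, fun h => ⟨R, h⟩⟩
  by_contra! hn
  obtain ⟨k, hk⟩ := ((hR.tendsto_norm_iterate hn.le).eventually_gt_atTop M).exists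
  rw [← iterate_add_apply] at hk
  exact (hM (k + n)).not_gt hk

theorem filledJuliaSet_subset_closedBall (hR : IsEscapeRadius p R) :
    filledJuliaSet p ⊆ closedBall 0 R := fun z hz => by
  simpa using (hR.mem_filledJuliaSet_iff.mp hz) 0

theorem tendsto_norm_iterate_of_notMem (hR : IsEscapeRadius p R) {z : ℂ}
    (hz : z ∉ filledJuliaSet p) :
    Tendsto (fun n => ‖(p.eval ·)^[n] z‖) atTop atTop := by
  obtain ⟨N, hN⟩ := not_forall.mp (mt hR.mem_filledJuliaSet_iff.mpr hz)
  refine (tendsto_add_atTop_iff_nat N).mp ?_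
  simpa only [iterate_add_apply] using hR.tendsto_norm_iterate (not_le.mp hN).le

theorem isClosed_filledJuliaSet (hR : IsEscapeRadius p R) : IsClosed (filledJuliaSet p) := by
  have : filledJuliaSet p = ⋂ n, {z | ‖(p.eval ·)^[n] z‖ ≤ R} := by
    ext z; simp [hR.mem_filledJuliaSet_iff]
  rw [this]
  exact isClosed_iInter fun n =>
    isClosed_le (p.continuous.iterate n).norm continuous_const

theorem infty_mem_fatouSet (hR : IsEscapeRadius p R) : ∞ ∈ FatouSet (polySphere p) := by
  refine mem_fatouSet_iff.mpr fun ε hε => ?_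
  obtain ⟨T, hRT, hTε⟩ : ∃ T, R ≤ T ∧ 2 / T < ε := ((eventually_ge_atTop R).and <|
    (tendsto_const_nhds.div_atTop tendsto_id).eventually (gt_mem_nhds hε)).exists
  have hT : 0 < T := by linarith [hR.1]
  rw [OnePoint.nhds_infty_eq, coclosedCompact_eq_cocompact]
  refine eventually_sup.mpr ⟨eventually_map.mpr ?_, ?_⟩
  · filter_upwards [tendsto_norm_cocompact_atTop.eventually_ge_atTop T] with w hw n
    rw [polySphere_iterate_infty, polySphere_iterate_coe]
    exact (chordalDist_infty_coe_le_of_le_norm hT (hR.le_norm_iterate hRT hw n)).trans_lt hTε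
  · exact eventually_pure.mpr fun n => by rw [polySphere_iterate_infty]; exact hε

theorem coe_mem_fatouSet_of_mem_interior (hR : IsEscapeRadius p R) {z : ℂ}
    (hz : z ∈ interior (filledJuliaSet p)) : (z : RSphere) ∈ FatouSet (polySphere p) :=
  coe_mem_fatouSet_polySphere_of_equicontinuousAt <|
    equicontinuousAt_of_differentiableOn_of_norm_le (mem_interior_iff_mem_nhds.mp hz)
      (fun n => (p.differentiable.iterate n).differentiableOn)
      (fun n _ hw => hR.mem_filledJuliaSet_iff.mp hw n)

theorem coe_mem_fatouSet_of_notMem (hR : IsEscapeRadius p R) {z : ℂ}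
    (hz : z ∉ filledJuliaSet p) : (z : RSphere) ∈ FatouSet (polySphere p) := by
  refine coe_mem_fatouSet_polySphere_iff.mpr fun ε hε => ?_
  obtain ⟨T, hRT, hTε⟩ : ∃ T, R ≤ T ∧ 4 / T < ε := ((eventually_ge_atTop R).and <|
    (tendsto_const_nhds.div_atTop tendsto_id).eventually (gt_mem_nhds hε)).exists
  have hT : 0 < T := by linarith [hR.1]
  obtain ⟨N, hN⟩ := ((hR.tendsto_norm_iterate_of_notMem hz).eventually_gt_atTop T).exists
  have hcont (n : ℕ) : Continuous (p.eval ·)^[n] := p.continuous.iterate n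
  -- before time `N` nearby orbits stay close; from time `N` on they stay outside radius `T`
  have hearly : ∀ᶠ w in 𝓝 z, ∀ n ∈ Iio N,
      dist ((p.eval ·)^[n] w) ((p.eval ·)^[n] z) < ε / 2 :=
    (finite_Iio N).eventually_all.mpr fun n _ =>
      ((hcont n).tendsto z).eventually (ball_mem_nhds _ (half_pos hε))
  have hlate : ∀ᶠ w in 𝓝 z, T < ‖(p.eval ·)^[N] w‖ :=
    continuousAt_const.eventually_lt (hcont N).norm.continuousAt hN
  filter_upwards [hearly, hlate] with w hwe hwl n
  rcases lt_or_ge n N with hn | hn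
  · calc _ ≤ 2 * ‖_ - _‖ := chordalDist_coe_coe_le _ _
      _ < ε := by rw [← dist_eq_norm, dist_comm]; linarith [hwe n hn]
  · obtain ⟨k, rfl⟩ := exists_add_of_le hn
    rw [add_comm, iterate_add_apply, iterate_add_apply]
    exact (chordalDist_coe_coe_le_of_le_norm hT (hR.le_norm_iterate hRT hN.le k)
      (hR.le_norm_iterate hRT hwl.le k)).trans_lt hTε

theorem coe_notMem_fatouSet_of_mem_frontier (hR : IsEscapeRadius p R) {z : ℂ}
    (hz : z ∈ frontier (filledJuliaSet p)) : (z : RSphere) ∉ FatouSet (polySphere p) := by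
  rw [hR.isClosed_filledJuliaSet.frontier_eq] at hz
  obtain ⟨hzK, hzi⟩ := hz
  intro hF
  have hε : 0 < (2 * (1 + R))⁻¹ := by have := hR.1; positivity
  have hesc : ∃ᶠ w in 𝓝 z, w ∉ filledJuliaSet p :=
    not_eventually.mp (mt mem_interior_iff_mem_nhds.mpr hzi)
  obtain ⟨w, hw, hwK⟩ :=
    ((coe_mem_fatouSet_polySphere_iff.mp hF _ hε).and_frequently hesc).exists
  obtain ⟨n, hn⟩ := ((hR.tendsto_norm_iterate_of_notMem hwK).eventually_ge_atTop (2 * R)).exists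
  exact (hw n).not_ge
    (inv_two_mul_one_add_le_chordalDist hR.1 (hR.mem_filledJuliaSet_iff.mp hzK n) hn)

end IsEscapeRadius

theorem juliaSet_polySphere_eq_image_frontier {p : ℂ[X]} (hp : 2 ≤ p.natDegree) :
    JuliaSet (polySphere p) = (↑) '' frontier (filledJuliaSet p) := by
  obtain ⟨R, hR⟩ := exists_isEscapeRadius hp
  ext x
  induction x using OnePoint.rec with
  | infty => simp [JuliaSet, hR.infty_mem_fatouSet]
  | coe z =>
    rw [JuliaSet, mem_compl_iff, OnePoint.coe_injective.mem_set_image]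
    refine ⟨fun hF => ?_, hR.coe_notMem_fatouSet_of_mem_frontier⟩
    rw [hR.isClosed_filledJuliaSet.frontier_eq]
    by_cases hzK : z ∈ filledJuliaSet p
    · exact ⟨hzK, fun hzi => hF (hR.coe_mem_fatouSet_of_mem_interior hzi)⟩
    · exact absurd (hR.coe_mem_fatouSet_of_notMem hzK) hF

theorem mapsTo_eval_filledJuliaSet_of_comp_comm {p q : ℂ[X]} (h : p.comp q = q.comp p) :
    MapsTo (q.eval ·) (filledJuliaSet p) (filledJuliaSet p) := by
  rintro z ⟨M, hM⟩
  have hcomm : Function.Commute (p.eval ·) (q.eval ·) := fun w => by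
    simpa only [eval_comp] using congrArg (Polynomial.eval w) h
  obtain ⟨C, hC⟩ :=
    (isCompact_closedBall (0 : ℂ) M).exists_bound_of_continuousOn q.continuous.continuousOn
  exact ⟨C, fun n => (hcomm.iterate_left n).eq z ▸ hC _ (mem_closedBall_zero_iff.mpr (hM n))⟩

theorem filledJuliaSet_subset_of_comp_comm {p q : ℂ[X]} (hp : 2 ≤ p.natDegree)
    (h : p.comp q = q.comp p) : filledJuliaSet p ⊆ filledJuliaSet q := by
  obtain ⟨R, hR⟩ := exists_isEscapeRadius hp
  refine fun z hz => ⟨R, fun n => mem_closedBall_zero_iff.mp ?_⟩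
  exact hR.filledJuliaSet_subset_closedBall <|
    (mapsTo_eval_filledJuliaSet_of_comp_comm h).iterate n hz

/-- If two polynomials `p` and `q` of degree at least `2` commute,
then they have the same Julia set. -/
theorem juliaSet_eq_of_commute (p q : Polynomial ℂ)
    (hp : 2 ≤ p.natDegree) (hq : 2 ≤ q.natDegree)
    (hcomm : p.comp q = q.comp p) :
    JuliaSet (polySphere p) = JuliaSet (polySphere q) := by
  rw [juliaSet_polySphere_eq_image_frontier hp, juliaSet_polySphere_eq_image_frontier hq,
    (filledJuliaSet_subset_of_comp_comm hp hcomm).antisymm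
      (filledJuliaSet_subset_of_comp_comm hq hcomm.symm)]

end
end

section
/- Let R(z) = z^d/(a₀z^d + a₁z^{d−1} + ⋯ + a_{d−1}z + a_d) be a rational map of degree d ≥ 2 with a_d ≠ 0 whose only exceptional point is 0. Let ζ = −a_{d−1}/(d·a_d), and let β be the order of rotational symmetries of R, i.e. the maximal β in the expression z^α p₀(z^β) of the normalized polynomial to which R is conjugate by a Möbius transformation. Then every Möbius map of the form z ↦ z/(ζ(1−λ)z + λ) with λ^β = 1 preserves J(R); that is, {z ↦ z/(ζ(1−λ)z + λ) : λ^β = 1} ⊆ M(R). -/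
/-!
Write `R = ι ∘ S ∘ ι` with `ι z = 1/z` and `S z = ∑ aᵢ zⁱ`. Since `0` is the only exceptional
point, the Möbius map conjugating `R` to the normalized polynomial `p = z^α p₀(z^β)` sends `0` to
`∞`, so it is `z ↦ f/z + e` and `f S(z) + e = p(f z + e)`. As `p` is monic and centred, comparing
the two top coefficients gives `e = -f ζ`. Hence the symmetries `p(λ w) = λ^α p(w)` (`λ^β = 1`)
become rotations `z ↦ ζ + λ(z - ζ)` for `S` and the Möbius maps `z ↦ z/(ζ(1-λ)z + λ)` for `R`.
These maps form a family of homeomorphisms, closed under inverses, uniformly Lipschitz for the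
chordal metric and carrying `R`-orbits to `R`-orbits, so they preserve the Fatou set.
-/

open Polynomial OnePoint

noncomputable section

open Filter Topology Function Set

section Polynomials

variable {K : Type*} [Field K]

lemma coeff_sum_range_C_mul_X_pow (a : ℕ → K) {d k : ℕ} (hk : k ≤ d) :
    (∑ i ∈ Finset.range (d + 1), C (a i) * X ^ i).coeff k = a k := by
  simp only [finsetSum_coeff, coeff_C_mul_X_pow, Finset.sum_ite_eq, Finset.mem_range,
    if_pos (Nat.lt_succ_of_le hk)]

lemma natDegree_sum_range_C_mul_X_pow (a : ℕ → K) {d : ℕ} (had : a d ≠ 0) :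
    (∑ i ∈ Finset.range (d + 1), C (a i) * X ^ i).natDegree = d := by
  refine natDegree_eq_of_le_of_coeff_ne_zero ?_ (by rwa [coeff_sum_range_C_mul_X_pow a le_rfl])
  refine natDegree_sum_le_of_forall_le _ _ fun i hi => (natDegree_C_mul_X_pow_le _ _).trans ?_
  simpa [Nat.lt_succ_iff] using hi

lemma reflect_sum_range_C_mul_X_pow (a : ℕ → K) (d : ℕ) :
    reflect d (∑ i ∈ Finset.range (d + 1), C (a i) * X ^ i) =
      ∑ i ∈ Finset.range (d + 1), C (a i) * X ^ (d - i) := by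
  let reflectHom : K[X] →+ K[X] := AddMonoidHom.mk' (reflect d) fun f g => reflect_add f g d
  change reflectHom (∑ i ∈ Finset.range (d + 1), C (a i) * X ^ i) = _
  rw [map_sum]
  refine Finset.sum_congr rfl fun i hi => ?_
  rw [AddMonoidHom.mk'_apply, reflect_C_mul_X_pow,
    revAt_le (Nat.lt_succ_iff.1 (Finset.mem_range.1 hi))]

lemma eval_reflect {S : K[X]} {d : ℕ} (hS : S.natDegree ≤ d) {z : K} (hz : z ≠ 0) :
    (reflect d S).eval z = z ^ d * S.eval z⁻¹ := by
  let := invertibleOfNonzero (inv_ne_zero hz)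
  have h := eval₂_reflect_mul_pow (RingHom.id K) z⁻¹ d S hS
  rw [invOf_eq_inv, inv_inv, eval₂_id, eval₂_id] at h
  rw [← h, mul_left_comm, ← mul_pow, mul_inv_cancel₀ hz, one_pow, mul_one]

lemma comp_C_mul_X_add_C_eq_taylor_comp (p : K[X]) (f e : K) :
    p.comp (C f * X + C e) = (taylor e p).comp (C f * X) := by
  rw [taylor_apply, Polynomial.comp_assoc, add_comp, X_comp, C_comp]

lemma coeff_comp_C_mul_X_add_C_natDegree (p : K[X]) (f e : K) :
    (p.comp (C f * X + C e)).coeff p.natDegree = f ^ p.natDegree * p.leadingCoeff := by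
  rw [comp_C_mul_X_add_C_eq_taylor_comp, comp_C_mul_X_coeff, coeff_taylor_natDegree, mul_comm]

lemma coeff_comp_C_mul_X_add_C_natDegree_sub_one {p : K[X]} (hp : 0 < p.natDegree) (f e : K) :
    (p.comp (C f * X + C e)).coeff (p.natDegree - 1) =
      f ^ (p.natDegree - 1) * (p.coeff (p.natDegree - 1) + p.natDegree * e * p.leadingCoeff) := by
  set n := p.natDegree
  have hlin : (hasseDeriv (n - 1) p).natDegree ≤ 1 :=
    (natDegree_hasseDeriv_le p _).trans (by omega : n - (n - 1) ≤ 1)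
  have hchoose : (1 + (n - 1)).choose (n - 1) = n := by
    rw [show 1 + (n - 1) = n by omega, Nat.choose_symm_of_eq_add (show n = n - 1 + 1 by omega),
      Nat.choose_one_right]
  rw [comp_C_mul_X_add_C_eq_taylor_comp, comp_C_mul_X_coeff, taylor_coeff,
    eq_X_add_C_of_natDegree_le_one hlin, hasseDeriv_coeff, hasseDeriv_coeff, hchoose,
    show 1 + (n - 1) = n by omega]
  simp only [eval_add, eval_mul, eval_C, eval_X, zero_add, Nat.choose_self, Nat.cast_one, one_mul,
    leadingCoeff]
  ring

-- Comparing the two top coefficients of `f • S + e = p ∘ (f • X + e)`: the top one gives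
-- `S_d = f ^ (d - 1)`, and since `p` is centred the next one gives `f S_{d-1} = d e f ^ (d - 1)`.
lemma eq_div_of_C_mul_add_C_eq_comp [CharZero K] {p S : K[X]} {f e : K} (hS : 2 ≤ S.natDegree)
    (hp : p.Monic) (hcent : p.coeff (p.natDegree - 1) = 0) (hf : f ≠ 0)
    (h : C f * S + C e = p.comp (C f * X + C e)) :
    e = f * S.coeff (S.natDegree - 1) / (S.natDegree * S.leadingCoeff) := by
  have hpd : p.natDegree = S.natDegree := by
    simpa [natDegree_C_mul hf, natDegree_comp, natDegree_linear hf] using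
      (congrArg natDegree h).symm
  set d := S.natDegree
  have htop := congrArg (coeff · p.natDegree) h
  have hnext := congrArg (coeff · (p.natDegree - 1)) h
  simp only [coeff_add, coeff_C_mul, coeff_C, hpd, if_neg (show d ≠ 0 by omega),
    if_neg (show d - 1 ≠ 0 by omega), add_zero] at htop hnext
  rw [← hpd, coeff_comp_C_mul_X_add_C_natDegree, hp.leadingCoeff, hpd] at htop
  rw [← hpd, coeff_comp_C_mul_X_add_C_natDegree_sub_one (by omega), hp.leadingCoeff, hcent,
    hpd] at hnext
  have hSd : S.leadingCoeff = f ^ (d - 1) := by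
    refine mul_left_cancel₀ hf ?_
    rw [leadingCoeff, htop, mul_one, ← pow_succ', Nat.sub_add_cancel (by omega)]
  have hd0 : (d : K) ≠ 0 := Nat.cast_ne_zero.2 (by omega)
  rw [hnext, hSd]
  field_simp
  ring

lemma eval_X_pow_mul_comp_X_pow (p₀ : K[X]) (α : ℕ) {β : ℕ} {μ : K} (hμ : μ ^ β = 1) (z : K) :
    (X ^ α * p₀.comp (X ^ β)).eval (μ * z) = μ ^ α * (X ^ α * p₀.comp (X ^ β)).eval z := by
  simp only [eval_mul, eval_pow, eval_X, eval_comp, mul_pow, hμ, one_mul]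
  ring

-- `S` is conjugate to `p` by `z ↦ f (z - ζ)`, so symmetries of `p` fixing `0` become rotations
-- about `ζ`.
lemma eval_rotation_of_eval_affine {p S : K[X]} {f e ζ μ ν : K} (hf : f ≠ 0) (he : e = -(f * ζ))
    (hconj : ∀ z, f * S.eval z + e = p.eval (f * z + e)) (hp : ∀ w, p.eval (μ * w) = ν * p.eval w)
    (z : K) : S.eval (μ * z + ζ * (1 - μ)) = ν * S.eval z + ζ * (1 - ν) := by
  refine mul_left_cancel₀ hf (add_right_cancel (b := e) ?_)
  rw [hconj, show f * (μ * z + ζ * (1 - μ)) + e = μ * (f * z + e) by rw [he]; ring, hp, ← hconj,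
    he]
  ring

end Polynomials

section SphereMaps

@[simp] lemma invSphere_infty : invSphere ∞ = ((0 : ℂ) : RSphere) := rfl

@[simp] lemma invSphere_coe (z : ℂ) :
    invSphere z = if z = 0 then ∞ else ((z⁻¹ : ℂ) : RSphere) := rfl

@[simp] lemma affineSphere_infty (a b : ℂ) : affineSphere a b ∞ = ∞ := rfl

@[simp] lemma affineSphere_coe (a b z : ℂ) : affineSphere a b z = ((a * z + b : ℂ) : RSphere) :=
  rfl

@[simp] lemma mobiusSphere_infty (a b c d : ℂ) :
    mobiusSphere a b c d ∞ = if c = 0 then ∞ else ((a / c : ℂ) : RSphere) := rfl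

@[simp] lemma mobiusSphere_coe (a b c d z : ℂ) :
    mobiusSphere a b c d z =
      if c * z + d = 0 then ∞ else (((a * z + b) / (c * z + d) : ℂ) : RSphere) := rfl

@[simp] lemma polySphere_infty (p : ℂ[X]) : polySphere p ∞ = ∞ := rfl

@[simp] lemma polySphere_coe (p : ℂ[X]) (z : ℂ) : polySphere p z = ((p.eval z : ℂ) : RSphere) :=
  rfl

@[simp] lemma ratSphere_infty (P Q : ℂ[X]) :
    ratSphere P Q ∞ = if P.natDegree > Q.natDegree then ∞
      else ((P.leadingCoeff / Q.leadingCoeff : ℂ) : RSphere) := rfl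

@[simp] lemma ratSphere_coe (P Q : ℂ[X]) (z : ℂ) :
    ratSphere P Q z = if Q.eval z = 0 then ∞ else ((P.eval z / Q.eval z : ℂ) : RSphere) := rfl

lemma invSphere_involutive : Involutive invSphere := by
  intro x
  induction x using OnePoint.rec with
  | infty => simp
  | coe z => by_cases hz : z = 0 <;> simp [hz]

lemma polySphere_eq_infty_iff (p : ℂ[X]) (x : RSphere) : polySphere p x = ∞ ↔ x = ∞ := by
  induction x using OnePoint.rec <;> simp

lemma affineSphere_comp (a b a' b' : ℂ) :
    affineSphere a b ∘ affineSphere a' b' = affineSphere (a * a') (a * b' + b) := by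
  funext x
  induction x using OnePoint.rec with
  | infty => rfl
  | coe z =>
    simp only [comp_apply, affineSphere_coe, OnePoint.coe_eq_coe]
    ring

lemma affineSphere_one_zero : affineSphere 1 0 = id := by
  funext x
  induction x using OnePoint.rec <;> simp

lemma mobiusSphere_one_zero_eq (c : ℂ) {μ : ℂ} (hμ : μ ≠ 0) :
    mobiusSphere 1 0 c μ = invSphere ∘ affineSphere μ c ∘ invSphere := by
  funext x
  induction x using OnePoint.rec with
  | infty => by_cases hc : c = 0 <;> simp [hc]
  | coe z =>
    by_cases hz : z = 0
    · simp [hz, hμ]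
    have key : μ * z⁻¹ + c = (c * z + μ) / z := by field_simp; ring
    by_cases hden : c * z + μ = 0 <;> simp [hz, hden, key]

lemma mobiusSphere_eq_affineSphere_comp_invSphere (a b : ℂ) {c : ℂ} (hc : c ≠ 0) :
    mobiusSphere a b c 0 = affineSphere (b / c) (a / c) ∘ invSphere := by
  funext x
  induction x using OnePoint.rec with
  | infty => simp [hc]
  | coe z =>
    by_cases hz : z = 0
    · simp [hz]
    · simp only [mobiusSphere_coe, add_zero, mul_eq_zero, hc, hz, or_self, if_false, comp_apply,
        invSphere_coe, affineSphere_coe, OnePoint.coe_eq_coe]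
      field_simp
      ring

lemma affineSphere_eq_map (a b : ℂ) : affineSphere a b = OnePoint.map (fun z => a * z + b) := by
  funext x
  induction x using OnePoint.rec <;> rfl

lemma continuous_affineSphere {a : ℂ} (ha : a ≠ 0) (b : ℂ) : Continuous (affineSphere a b) := by
  rw [affineSphere_eq_map]
  exact ((Homeomorph.mulLeft₀ a ha).trans (Homeomorph.addRight b)).onePointCongr.continuous

lemma continuous_invSphere : Continuous invSphere := by
  have hcob : coclosedCompact ℂ = Bornology.cobounded ℂ := by
    rw [coclosedCompact_eq_cocompact, Metric.cobounded_eq_cocompact]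
  refine continuous_iff_continuousAt.2 fun x => ?_
  induction x using OnePoint.rec with
  | infty =>
    rw [OnePoint.continuousAt_infty', hcob]
    have h : Tendsto (fun z : ℂ => ((z⁻¹ : ℂ) : RSphere)) (Bornology.cobounded ℂ)
        (𝓝 ((0 : ℂ) : RSphere)) :=
      (OnePoint.continuous_coe.tendsto 0).comp tendsto_inv₀_cobounded
    refine h.congr' ?_
    filter_upwards [Bornology.eventually_ne_cobounded 0] with z hz
    simp [hz]
  | coe z =>
    rw [OnePoint.continuousAt_coe]
    by_cases hz : z = 0
    · subst hz
      show Tendsto _ (𝓝 0) (𝓝 (invSphere (0 : ℂ)))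
      rw [← nhdsNE_sup_pure (0 : ℂ), tendsto_sup, invSphere_coe, if_pos rfl]
      refine ⟨?_, tendsto_pure_left.2 fun s hs => by simpa using mem_of_mem_nhds hs⟩
      have h : Tendsto (fun w : ℂ => ((w⁻¹ : ℂ) : RSphere)) (𝓝[≠] 0) (𝓝 ∞) :=
        OnePoint.tendsto_coe_infty.comp (hcob ▸ tendsto_inv₀_nhdsNE_zero)
      refine h.congr' ?_
      filter_upwards [self_mem_nhdsWithin] with w hw
      simp_all
    · refine (OnePoint.continuous_coe.continuousAt.comp (continuousAt_inv₀ hz)).congr ?_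
      filter_upwards [eventually_ne_nhds hz] with w hw
      simp [hw]

end SphereMaps

section HomogeneousCoordinates

def homog : RSphere → ℂ × ℂ := fun x =>
  match x with
  | (∞ : RSphere) => (1, 0)
  | (z : ℂ) => (z, 1)

def cross (u v : ℂ × ℂ) : ℂ := u.1 * v.2 - u.2 * v.1

def sqNorm (u : ℂ × ℂ) : ℝ := ‖u.1‖ ^ 2 + ‖u.2‖ ^ 2

def matVec (a b c d : ℂ) (u : ℂ × ℂ) : ℂ × ℂ := (a * u.1 + b * u.2, c * u.1 + d * u.2)

def projDist (u v : ℂ × ℂ) : ℝ := 2 * ‖cross u v‖ / (√(sqNorm u) * √(sqNorm v))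

@[simp] lemma homog_infty : homog ∞ = (1, 0) := rfl

@[simp] lemma homog_coe (z : ℂ) : homog z = (z, 1) := rfl

lemma one_le_sqNorm_homog (x : RSphere) : 1 ≤ sqNorm (homog x) := by
  induction x using OnePoint.rec <;> simp [sqNorm]

lemma chordalDist_eq_projDist (x y : RSphere) : chordalDist x y = projDist (homog x) (homog y) := by
  induction x using OnePoint.rec <;> induction y using OnePoint.rec <;>
    simp [chordalDist, projDist, cross, sqNorm, add_comm]

lemma chordalDist_nonneg (x y : RSphere) : 0 ≤ chordalDist x y := by
  rw [chordalDist_eq_projDist, projDist]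
  positivity

lemma sqNorm_smul (s : ℂ) (u : ℂ × ℂ) : sqNorm (s • u) = ‖s‖ ^ 2 * sqNorm u := by
  simp only [sqNorm, Prod.smul_fst, Prod.smul_snd, smul_eq_mul, norm_mul]
  ring

lemma projDist_smul {s t : ℂ} (hs : s ≠ 0) (ht : t ≠ 0) (u v : ℂ × ℂ) :
    projDist (s • u) (t • v) = projDist u v := by
  have hcross : cross (s • u) (t • v) = s * t * cross u v := by
    simp only [cross, Prod.smul_fst, Prod.smul_snd, smul_eq_mul]
    ring
  have hst : 0 < ‖s‖ * ‖t‖ := by positivity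
  simp only [projDist, hcross, sqNorm_smul, norm_mul]
  rw [Real.sqrt_mul (by positivity), Real.sqrt_mul (by positivity), Real.sqrt_sq (norm_nonneg s),
    Real.sqrt_sq (norm_nonneg t)]
  calc 2 * (‖s‖ * ‖t‖ * ‖cross u v‖) / (‖s‖ * √(sqNorm u) * (‖t‖ * √(sqNorm v)))
      = (‖s‖ * ‖t‖) * (2 * ‖cross u v‖) / ((‖s‖ * ‖t‖) * (√(sqNorm u) * √(sqNorm v))) := by ring
    _ = _ := mul_div_mul_left _ _ hst.ne'

lemma cross_matVec (a b c d : ℂ) (u v : ℂ × ℂ) :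
    cross (matVec a b c d u) (matVec a b c d v) = (a * d - b * c) * cross u v := by
  simp only [cross, matVec]
  ring

lemma sqNorm_matVec_le (a b c d : ℂ) (u : ℂ × ℂ) :
    sqNorm (matVec a b c d u) ≤ (‖a‖ ^ 2 + ‖b‖ ^ 2 + ‖c‖ ^ 2 + ‖d‖ ^ 2) * sqNorm u := by
  have row : ∀ p q : ℂ, ‖p * u.1 + q * u.2‖ ^ 2 ≤ (‖p‖ ^ 2 + ‖q‖ ^ 2) * sqNorm u := by
    intro p q
    have htri : ‖p * u.1 + q * u.2‖ ≤ ‖p‖ * ‖u.1‖ + ‖q‖ * ‖u.2‖ :=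
      (norm_add_le _ _).trans_eq (by rw [norm_mul, norm_mul])
    calc ‖p * u.1 + q * u.2‖ ^ 2 ≤ (‖p‖ * ‖u.1‖ + ‖q‖ * ‖u.2‖) ^ 2 :=
          pow_le_pow_left₀ (norm_nonneg _) htri 2
      _ ≤ (‖p‖ ^ 2 + ‖q‖ ^ 2) * sqNorm u := by
          rw [sqNorm]
          nlinarith [sq_nonneg (‖p‖ * ‖u.2‖ - ‖q‖ * ‖u.1‖)]
  calc sqNorm (matVec a b c d u)
      ≤ (‖a‖ ^ 2 + ‖b‖ ^ 2) * sqNorm u + (‖c‖ ^ 2 + ‖d‖ ^ 2) * sqNorm u :=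
        add_le_add (row a b) (row c d)
    _ = _ := by ring

-- The adjugate has the same entries up to sign and inverts the matrix up to the determinant.
lemma sqNorm_le_sqNorm_matVec (a b c d : ℂ) (u : ℂ × ℂ) :
    ‖a * d - b * c‖ ^ 2 * sqNorm u ≤
      (‖a‖ ^ 2 + ‖b‖ ^ 2 + ‖c‖ ^ 2 + ‖d‖ ^ 2) * sqNorm (matVec a b c d u) := by
  have hadj : matVec d (-b) (-c) a (matVec a b c d u) = (a * d - b * c) • u := by
    ext <;> simp only [matVec, Prod.smul_fst, Prod.smul_snd, smul_eq_mul] <;> ring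
  have h := sqNorm_matVec_le d (-b) (-c) a (matVec a b c d u)
  rw [hadj, sqNorm_smul, norm_neg, norm_neg] at h
  linarith

lemma matVec_homog {a b c d : ℂ} (hdet : a * d - b * c ≠ 0) (x : RSphere) :
    ∃ s : ℂ, s ≠ 0 ∧ matVec a b c d (homog x) = s • homog (mobiusSphere a b c d x) := by
  induction x using OnePoint.rec with
  | infty =>
    by_cases hc : c = 0
    · exact ⟨a, fun ha => hdet (by simp [ha, hc]), by simp [matVec, hc]⟩
    · exact ⟨c, hc, by simp [matVec, hc, mul_div_cancel₀]⟩
  | coe z =>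
    by_cases hz : c * z + d = 0
    · refine ⟨a * z + b, fun h0 => hdet ?_, by simp [matVec, hz]⟩
      linear_combination a * hz - c * h0
    · exact ⟨c * z + d, hz, by simp [matVec, hz, mul_div_cancel₀ _ hz]⟩

lemma cross_homog_eq_zero_iff (x y : RSphere) : cross (homog x) (homog y) = 0 ↔ x = y := by
  induction x using OnePoint.rec <;> induction y using OnePoint.rec <;> simp [cross, sub_eq_zero]

lemma mobiusSphere_injective {a b c d : ℂ} (hdet : a * d - b * c ≠ 0) :
    Injective (mobiusSphere a b c d) := by
  intro x y hxy
  obtain ⟨s, -, hs⟩ := matVec_homog hdet x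
  obtain ⟨t, -, ht⟩ := matVec_homog hdet y
  have h := cross_matVec a b c d (homog x) (homog y)
  have hcross :
      cross (s • homog (mobiusSphere a b c d y)) (t • homog (mobiusSphere a b c d y)) = 0 := by
    simp only [cross, Prod.smul_fst, Prod.smul_snd, smul_eq_mul]
    ring
  rw [hs, ht, hxy, hcross] at h
  exact (cross_homog_eq_zero_iff x y).1 ((mul_eq_zero.1 h.symm).resolve_left hdet)

lemma chordalDist_mobiusSphere_le {a b c d : ℂ} (hdet : a * d - b * c ≠ 0) (x y : RSphere) :
    chordalDist (mobiusSphere a b c d x) (mobiusSphere a b c d y) ≤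
      (‖a‖ ^ 2 + ‖b‖ ^ 2 + ‖c‖ ^ 2 + ‖d‖ ^ 2) / ‖a * d - b * c‖ * chordalDist x y := by
  obtain ⟨s, hs, hsx⟩ := matVec_homog hdet x
  obtain ⟨t, ht, hty⟩ := matVec_homog hdet y
  rw [chordalDist_eq_projDist, chordalDist_eq_projDist, ← projDist_smul hs ht, ← hsx, ← hty]
  have hu := sqNorm_le_sqNorm_matVec a b c d (homog x)
  have hv := sqNorm_le_sqNorm_matVec a b c d (homog y)
  have hu1 := one_le_sqNorm_homog x
  have hv1 := one_le_sqNorm_homog y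
  set K := ‖a‖ ^ 2 + ‖b‖ ^ 2 + ‖c‖ ^ 2 + ‖d‖ ^ 2
  set D := ‖a * d - b * c‖
  set u := homog x
  set v := homog y
  have hD : 0 < D := norm_pos_iff.2 hdet
  have hK : 0 < K := by
    refine lt_of_le_of_ne (by positivity) fun hK0 => ?_
    rw [← hK0, zero_mul] at hu
    nlinarith [pow_pos hD 2]
  have hMu : 0 < sqNorm (matVec a b c d u) := by nlinarith
  have hMv : 0 < sqNorm (matVec a b c d v) := by nlinarith
  have hsqrt : ∀ w : ℂ × ℂ, D ^ 2 * sqNorm w ≤ K * sqNorm (matVec a b c d w) →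
      D * √(sqNorm w) ≤ √K * √(sqNorm (matVec a b c d w)) := by
    intro w hw
    rw [← Real.sqrt_sq hD.le, ← Real.sqrt_mul (sq_nonneg D), ← Real.sqrt_mul hK.le]
    exact Real.sqrt_le_sqrt hw
  have key : D ^ 2 * (√(sqNorm u) * √(sqNorm v)) ≤
      K * (√(sqNorm (matVec a b c d u)) * √(sqNorm (matVec a b c d v))) := by
    calc D ^ 2 * (√(sqNorm u) * √(sqNorm v)) = (D * √(sqNorm u)) * (D * √(sqNorm v)) := by ring
      _ ≤ (√K * √(sqNorm (matVec a b c d u))) * (√K * √(sqNorm (matVec a b c d v))) :=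
          mul_le_mul (hsqrt u hu) (hsqrt v hv) (by positivity) (by positivity)
      _ = _ := by rw [mul_mul_mul_comm, Real.mul_self_sqrt hK.le]
  calc projDist (matVec a b c d u) (matVec a b c d v)
      = 2 * (D * ‖cross u v‖) /
          (√(sqNorm (matVec a b c d u)) * √(sqNorm (matVec a b c d v))) := by
        rw [projDist, cross_matVec, norm_mul]
    _ ≤ 2 * (D * ‖cross u v‖) / (D ^ 2 / K * (√(sqNorm u) * √(sqNorm v))) := by
        refine div_le_div_of_nonneg_left (by positivity) (by positivity) ?_
        rw [div_mul_eq_mul_div, div_le_iff₀ hK]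
        linarith
    _ = K / D * projDist u v := by
        rw [projDist]
        field_simp

end HomogeneousCoordinates

section JuliaSetSymmetries

variable {R : RSphere → RSphere} {G : Set (RSphere → RSphere)}

lemma exists_semiconj_iterate (hsemi : ∀ g ∈ G, ∃ g' ∈ G, Semiconj R g g') (n : ℕ) :
    ∀ g ∈ G, ∃ g' ∈ G, Semiconj R^[n] g g' := by
  induction n with
  | zero => exact fun g hg => ⟨g, hg, Semiconj.id_left⟩
  | succ n ih =>
    intro g hg
    obtain ⟨g₁, hg₁, h₁⟩ := hsemi g hg
    obtain ⟨g₂, hg₂, h₂⟩ := ih g₁ hg₁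
    exact ⟨g₂, hg₂, by rw [iterate_succ]; exact h₂.comp_left h₁⟩

lemma mapsTo_fatouSet
    (hequi : ∀ ε > 0, ∃ δ > 0, ∀ g ∈ G, ∀ x y, chordalDist x y < δ → chordalDist (g x) (g y) < ε)
    (hcont : ∀ g ∈ G, Continuous g) (hinv : ∀ g ∈ G, ∃ h ∈ G, LeftInverse h g ∧ RightInverse h g)
    (hsemi : ∀ g ∈ G, ∃ g' ∈ G, Semiconj R g g') {g : RSphere → RSphere} (hg : g ∈ G) :
    MapsTo g (FatouSet R) (FatouSet R) := by
  intro x hx ε hε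
  obtain ⟨δ, hδ, hgδ⟩ := hequi ε hε
  obtain ⟨V, hV, hVx⟩ := hx δ hδ
  obtain ⟨h, hhG, hleft, hright⟩ := hinv g hg
  refine ⟨h ⁻¹' V, (hcont h hhG).continuousAt.preimage_mem_nhds (by rwa [hleft x]), ?_⟩
  intro y hy n
  obtain ⟨g', hg'G, hsc⟩ := exists_semiconj_iterate hsemi n g hg
  rw [← hright y, hsc.eq, hsc.eq]
  exact hgδ g' hg'G _ _ (hVx (h y) hy n)

theorem image_juliaSet_eq
    (hequi : ∀ ε > 0, ∃ δ > 0, ∀ g ∈ G, ∀ x y, chordalDist x y < δ → chordalDist (g x) (g y) < ε)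
    (hcont : ∀ g ∈ G, Continuous g) (hinv : ∀ g ∈ G, ∃ h ∈ G, LeftInverse h g ∧ RightInverse h g)
    (hsemi : ∀ g ∈ G, ∃ g' ∈ G, Semiconj R g g') {g : RSphere → RSphere} (hg : g ∈ G) :
    g '' JuliaSet R = JuliaSet R := by
  obtain ⟨h, hhG, hleft, hright⟩ := hinv g hg
  have hfatou : g '' FatouSet R = FatouSet R :=
    (mapsTo_fatouSet hequi hcont hinv hsemi hg).image_subset.antisymm fun x hx =>
      ⟨h x, mapsTo_fatouSet hequi hcont hinv hsemi hhG hx, hright x⟩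
  rw [JuliaSet, image_compl_eq ⟨hleft.injective, hright.surjective⟩, hfatou]

end JuliaSetSymmetries

section MobiusRotations

lemma continuous_mobiusSphere_one_zero (c : ℂ) {μ : ℂ} (hμ : μ ≠ 0) :
    Continuous (mobiusSphere 1 0 c μ) := by
  rw [mobiusSphere_one_zero_eq c hμ]
  exact continuous_invSphere.comp ((continuous_affineSphere hμ c).comp continuous_invSphere)

variable (ζ : ℂ)

lemma chordalDist_mobiusSphere_rotation_le {μ : ℂ} (hμ : ‖μ‖ = 1) (x y : RSphere) :
    chordalDist (mobiusSphere 1 0 (ζ * (1 - μ)) μ x) (mobiusSphere 1 0 (ζ * (1 - μ)) μ y) ≤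
      (2 + (2 * ‖ζ‖) ^ 2) * chordalDist x y := by
  have hdet : (1 : ℂ) * μ - 0 * (ζ * (1 - μ)) ≠ 0 := by
    simpa using norm_ne_zero_iff.1 (by simp [hμ])
  have hc : ‖ζ * (1 - μ)‖ ≤ 2 * ‖ζ‖ := by
    rw [norm_mul, mul_comm]
    refine mul_le_mul_of_nonneg_right ((norm_sub_le _ _).trans ?_) (norm_nonneg ζ)
    rw [norm_one, hμ]
    norm_num
  refine (chordalDist_mobiusSphere_le hdet x y).trans
    (mul_le_mul_of_nonneg_right ?_ (chordalDist_nonneg x y))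
  simp only [one_mul, zero_mul, sub_zero, norm_one, norm_zero, hμ, div_one]
  nlinarith [norm_nonneg (ζ * (1 - μ))]

lemma mobiusSphere_rotation_comp {μ ν : ℂ} (hμ : μ ≠ 0) (hν : ν ≠ 0) :
    mobiusSphere 1 0 (ζ * (1 - μ)) μ ∘ mobiusSphere 1 0 (ζ * (1 - ν)) ν =
      mobiusSphere 1 0 (ζ * (1 - μ * ν)) (μ * ν) := by
  rw [mobiusSphere_one_zero_eq _ hμ, mobiusSphere_one_zero_eq _ hν,
    mobiusSphere_one_zero_eq _ (mul_ne_zero hμ hν)]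
  change invSphere ∘ (affineSphere μ _ ∘ (invSphere ∘ invSphere) ∘ affineSphere ν _) ∘
    invSphere = _
  rw [invSphere_involutive.comp_self, id_comp, affineSphere_comp,
    show μ * (ζ * (1 - ν)) + ζ * (1 - μ) = ζ * (1 - μ * ν) by ring]

lemma mobiusSphere_rotation_one : mobiusSphere 1 0 (ζ * (1 - 1)) 1 = id := by
  rw [mobiusSphere_one_zero_eq _ one_ne_zero, sub_self, mul_zero, affineSphere_one_zero, id_comp,
    invSphere_involutive.comp_self]

lemma leftInverse_mobiusSphere_rotation {μ : ℂ} (hμ : μ ≠ 0) :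
    LeftInverse (mobiusSphere 1 0 (ζ * (1 - μ⁻¹)) μ⁻¹) (mobiusSphere 1 0 (ζ * (1 - μ)) μ) :=
  fun x => by
    rw [← comp_apply (f := mobiusSphere 1 0 _ _), mobiusSphere_rotation_comp ζ (inv_ne_zero hμ) hμ,
      inv_mul_cancel₀ hμ, mobiusSphere_rotation_one, id]

theorem image_juliaSet_mobiusSphere_rotation {R : RSphere → RSphere} {β : ℕ} (hβ : β ≠ 0)
    (hR : ∀ μ : ℂ, μ ^ β = 1 → ∃ ν : ℂ, ν ^ β = 1 ∧
      Semiconj R (mobiusSphere 1 0 (ζ * (1 - μ)) μ) (mobiusSphere 1 0 (ζ * (1 - ν)) ν))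
    {lam : ℂ} (hlam : lam ^ β = 1) :
    mobiusSphere 1 0 (ζ * (1 - lam)) lam '' JuliaSet R = JuliaSet R := by
  have hnorm : ∀ μ : ℂ, μ ^ β = 1 → ‖μ‖ = 1 := fun μ hμ => Complex.norm_eq_one_of_pow_eq_one hμ hβ
  have hne : ∀ μ : ℂ, μ ^ β = 1 → μ ≠ 0 := fun μ hμ => norm_ne_zero_iff.1 (by simp [hnorm μ hμ])
  refine image_juliaSet_eq (G := {g | ∃ μ : ℂ, μ ^ β = 1 ∧ g = mobiusSphere 1 0 (ζ * (1 - μ)) μ})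
    ?_ ?_ ?_ ?_ ⟨lam, hlam, rfl⟩
  · have hL : 0 < 2 + (2 * ‖ζ‖) ^ 2 := by positivity
    refine fun ε hε => ⟨ε / (2 + (2 * ‖ζ‖) ^ 2), div_pos hε hL, ?_⟩
    rintro _ ⟨μ, hμ, rfl⟩ x y hxy
    exact (chordalDist_mobiusSphere_rotation_le ζ (hnorm μ hμ) x y).trans_lt
      ((lt_div_iff₀' hL).1 hxy)
  · rintro _ ⟨μ, hμ, rfl⟩
    exact continuous_mobiusSphere_one_zero _ (hne μ hμ)
  · rintro _ ⟨μ, hμ, rfl⟩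
    refine ⟨_, ⟨μ⁻¹, by rw [inv_pow, hμ, inv_one], rfl⟩,
      leftInverse_mobiusSphere_rotation ζ (hne μ hμ), ?_⟩
    have h := leftInverse_mobiusSphere_rotation ζ (inv_ne_zero (hne μ hμ))
    rwa [inv_inv] at h
  · rintro _ ⟨μ, hμ, rfl⟩
    obtain ⟨ν, hν, hsc⟩ := hR μ hμ
    exact ⟨_, ⟨ν, hν, rfl⟩, hsc⟩

end MobiusRotations

section Conjugacies

lemma ratSphere_X_pow_reflect {d : ℕ} (hd : 0 < d) {S : ℂ[X]} (hS : S.natDegree = d) :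
    ratSphere (X ^ d) (reflect d S) = invSphere ∘ polySphere S ∘ invSphere := by
  have hS0 : S ≠ 0 := ne_zero_of_natDegree_gt (hS ▸ hd)
  funext x
  induction x using OnePoint.rec with
  | infty =>
    have hdeg : (reflect d S).natDegree ≤ d := natDegree_reflect_le.trans (by rw [hS, max_self])
    have htop : (reflect d S).coeff d = S.eval 0 := by
      rw [coeff_reflect, revAt_le le_rfl, Nat.sub_self, coeff_zero_eq_eval_zero]
    by_cases h0 : S.eval 0 = 0
    · have hlt : (reflect d S).natDegree < d := by
        refine lt_of_le_of_ne hdeg fun hdeq => ?_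
        have hlc : (reflect d S).leadingCoeff = 0 := by rw [leadingCoeff, hdeq, htop, h0]
        rw [leadingCoeff_eq_zero.1 hlc, natDegree_zero] at hdeq
        omega
      simp [hlt, h0]
    · have hdeq : (reflect d S).natDegree = d :=
        natDegree_eq_of_le_of_coeff_ne_zero hdeg (htop ▸ h0)
      simp [h0, hdeq, leadingCoeff, htop]
  | coe z =>
    by_cases hz : z = 0
    · have h0 : (reflect d S).eval 0 ≠ 0 := by
        rw [← coeff_zero_eq_eval_zero, coeff_reflect, revAt_le (Nat.zero_le d), Nat.sub_zero, ← hS]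
        exact leadingCoeff_ne_zero.2 hS0
      simp [hz, h0, zero_pow hd.ne']
    · have heval := eval_reflect hS.le hz
      by_cases hSz : S.eval z⁻¹ = 0
      · simp [hz, hSz, heval]
      · simp [hz, hSz, heval, pow_ne_zero d hz, div_mul_cancel_left₀]

lemma semiconj_polySphere_affineSphere {S : ℂ[X]} {a b a' b' : ℂ}
    (h : ∀ z, S.eval (a * z + b) = a' * S.eval z + b') :
    Semiconj (polySphere S) (affineSphere a b) (affineSphere a' b') := by
  intro x
  induction x using OnePoint.rec <;> simp [h]

lemma Function.Semiconj.conj_involutive {α : Type*} {ι f ga gb : α → α} (hι : Involutive ι)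
    (h : Semiconj f ga gb) : Semiconj (ι ∘ f ∘ ι) (ι ∘ ga ∘ ι) (ι ∘ gb ∘ ι) := fun x => by
  simp only [comp_apply, hι _, h.eq]

lemma Function.Semiconj.backwardOrbit_subset {α : Type*} {M R P : α → α} (h : Semiconj M R P)
    (hM : Injective M) {w : α} (hP : ∀ y, P y = M w ↔ y = M w) :
    {z | ∃ n, R^[n] z = w} ⊆ {w} := by
  have hPn : ∀ n y, P^[n] y = M w ↔ y = M w := by
    intro n
    induction n with
    | zero => exact fun y => Iff.rfl
    | succ n ih => exact fun y => by rw [iterate_succ_apply, ih, hP]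
  rintro z ⟨n, hn⟩
  exact hM ((hPn n (M z)).1 (by rw [← (h.iterate_right n).eq, hn]))

lemma exists_mobiusSphere_eq_infty (a b c d : ℂ) : ∃ w, mobiusSphere a b c d w = ∞ := by
  by_cases hc : c = 0
  · exact ⟨∞, by simp [hc]⟩
  · exact ⟨((-d / c : ℂ) : RSphere), by simp [mul_div_cancel₀ _ hc]⟩

-- The pole of a Möbius map conjugating `R` to a polynomial has a finite backward orbit.
lemma mobiusSphere_zero_eq_infty_of_semiconj {R : RSphere → RSphere} {p : ℂ[X]} {a b c d : ℂ}
    (hdet : a * d - b * c ≠ 0) (h : Semiconj (mobiusSphere a b c d) R (polySphere p))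
    (hexc : ∀ w, {z | ∃ n, R^[n] z = w}.Finite → w = ((0 : ℂ) : RSphere)) :
    mobiusSphere a b c d ((0 : ℂ) : RSphere) = ∞ := by
  obtain ⟨w, hw⟩ := exists_mobiusSphere_eq_infty a b c d
  have hfin := (finite_singleton w).subset
    (h.backwardOrbit_subset (mobiusSphere_injective hdet) (by simp [hw, polySphere_eq_infty_iff]))
  rwa [← hexc w hfin]

lemma eval_add_eq_eval_of_semiconj {S p : ℂ[X]} {f e : ℂ}
    (h : Semiconj (affineSphere f e ∘ invSphere) (invSphere ∘ polySphere S ∘ invSphere)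
      (polySphere p)) (z : ℂ) :
    f * S.eval z + e = p.eval (f * z + e) := by
  have hz := h.eq (invSphere z)
  simp only [comp_apply, invSphere_involutive _, polySphere_coe, affineSphere_coe] at hz
  exact OnePoint.coe_injective hz

end Conjugacies

theorem mobius_symmetries_of_exceptional_point_general (d : ℕ) (hd : 2 ≤ d) (a : ℕ → ℂ)
    (had : a d ≠ 0) (Q : Polynomial ℂ)
    (hQ : Q = ∑ i ∈ Finset.range (d + 1), C (a i) * X ^ (d - i))
    (R : RSphere → RSphere) (hR : R = ratSphere (X ^ d) Q)
    (hexc : ∀ w : RSphere,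
      {z : RSphere | ∃ n : ℕ, R^[n] z = w}.Finite ↔ w = ((0 : ℂ) : RSphere))
    (α β : ℕ) (hβ : 1 ≤ β) (p₀ : Polynomial ℂ)
    (hmono : p₀.Monic)
    (hcent : (X ^ α * p₀.comp (X ^ β) : Polynomial ℂ).coeff
      ((X ^ α * p₀.comp (X ^ β) : Polynomial ℂ).natDegree - 1) = 0)
    (hconj : ∃ A B C' D : ℂ, A * D - B * C' ≠ 0 ∧
      mobiusSphere A B C' D ∘ R = polySphere (X ^ α * p₀.comp (X ^ β)) ∘ mobiusSphere A B C' D)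
    (ζ : ℂ) (hζ : ζ = -(a (d - 1)) / ((d : ℂ) * a d)) :
    ∀ lam : ℂ, lam ^ β = 1 →
      mobiusSphere 1 0 (ζ * (1 - lam)) lam '' JuliaSet R = JuliaSet R := by
  intro lam hlam
  set S : ℂ[X] := ∑ i ∈ Finset.range (d + 1), C (a i) * X ^ i
  have hSd : S.natDegree = d := natDegree_sum_range_C_mul_X_pow a had
  have hRS : R = invSphere ∘ polySphere S ∘ invSphere := by
    rw [hR, hQ, ← reflect_sum_range_C_mul_X_pow, ratSphere_X_pow_reflect (by omega) hSd]
  obtain ⟨A, B, C', D, hdet, hM⟩ := hconj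
  rw [← semiconj_iff_comp_eq] at hM
  obtain rfl : D = 0 := by
    simpa using mobiusSphere_zero_eq_infty_of_semiconj hdet hM fun w => (hexc w).1
  obtain ⟨hB, hC⟩ : B ≠ 0 ∧ C' ≠ 0 := by simpa using hdet
  rw [mobiusSphere_eq_affineSphere_comp_invSphere A B hC, hRS] at hM
  have hf : B / C' ≠ 0 := div_ne_zero hB hC
  have hpoly := eval_add_eq_eval_of_semiconj hM
  have he : A / C' = -(B / C' * ζ) := by
    have hmonic := (monic_X_pow α).mul (hmono.comp (monic_X_pow β) (by rw [natDegree_X_pow]; omega))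
    refine (eq_div_of_C_mul_add_C_eq_comp (hSd ▸ hd) hmonic hcent hf
      (Polynomial.funext fun z => by simpa using hpoly z)).trans ?_
    rw [leadingCoeff, hSd,
      coeff_sum_range_C_mul_X_pow a (by omega), coeff_sum_range_C_mul_X_pow a le_rfl, hζ]
    ring
  refine image_juliaSet_mobiusSphere_rotation ζ (by omega) (fun μ hμ => ⟨μ ^ α, ?_, ?_⟩) hlam
  · rw [pow_right_comm, hμ, one_pow]
  have hμ0 : μ ≠ 0 := by rintro rfl; simp [zero_pow (by omega : β ≠ 0)] at hμ
  rw [hRS, mobiusSphere_one_zero_eq _ hμ0, mobiusSphere_one_zero_eq _ (pow_ne_zero α hμ0)]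
  exact (semiconj_polySphere_affineSphere (eval_rotation_of_eval_affine hf he hpoly
    (eval_X_pow_mul_comp_X_pow p₀ α hμ))).conj_involutive invSphere_involutive

/-- Let `R(z) = z^d/(a₀z^d + ⋯ + a_d)` (`d ≥ 2`, `a_d ≠ 0`) be a
rational map whose only exceptional point is `0`, let `ζ = -a_{d-1}/(d a_d)`, and let
`β` be the order of rotational symmetries of `R` (the maximal `β` in the expression
`z^α p₀(z^β)` of the normalized polynomial to which `R` is Möbius-conjugate).  Then
every Möbius map `z ↦ z/(ζ(1-λ)z + λ)` with `λ^β = 1` preserves `J(R)`. -/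
theorem mobius_symmetries_of_exceptional_point (d : ℕ) (hd : 2 ≤ d) (a : ℕ → ℂ)
    (had : a d ≠ 0) (Q : Polynomial ℂ)
    (hQ : Q = ∑ i ∈ Finset.range (d + 1), C (a i) * X ^ (d - i))
    (R : RSphere → RSphere) (hR : R = ratSphere (X ^ d) Q)
    (hexc : ∀ w : RSphere,
      {z : RSphere | ∃ n : ℕ, R^[n] z = w}.Finite ↔ w = ((0 : ℂ) : RSphere))
    (α β : ℕ) (hβ : 1 ≤ β) (p₀ : Polynomial ℂ)
    (hmono : p₀.Monic) (hconst : p₀.coeff 0 ≠ 0)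
    (hgcd : (p₀.support.erase 0).gcd id = 1)
    (hcent : (X ^ α * p₀.comp (X ^ β) : Polynomial ℂ).coeff
      ((X ^ α * p₀.comp (X ^ β) : Polynomial ℂ).natDegree - 1) = 0)
    (hconj : ∃ A B C' D : ℂ, A * D - B * C' ≠ 0 ∧
      mobiusSphere A B C' D ∘ R = polySphere (X ^ α * p₀.comp (X ^ β)) ∘ mobiusSphere A B C' D)
    (ζ : ℂ) (hζ : ζ = -(a (d - 1)) / ((d : ℂ) * a d)) :
    ∀ lam : ℂ, lam ^ β = 1 →
      mobiusSphere 1 0 (ζ * (1 - lam)) lam '' JuliaSet R = JuliaSet R :=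
  mobius_symmetries_of_exceptional_point_general d hd a had Q hQ R hR hexc α β hβ p₀ hmono hcent
    hconj ζ hζ
end
end
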